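/- arXiv:1304.1858 — 6 statements merged into one kernel-verified Lean document; each statement's English description precedes it below -/
import Mathlib

section
/- Let k, C_0, ..., C_k, L be nonnegative integers with C_0 ≥ 1. If C_0 ≥ L and C_0 + C_1 + ... + C_k ≥ kL, then there exist nonnegative integer edge capacities f_e on the complete directed graph on {v_0, ..., v_k} that decompose into L spanning arborescences rooted at v_0 (each arborescence reaching all of v_1,...,v_k), such that for each i the total capacity of edges leaving v_i is at most C_i. -/
/-!
Give every tree one unit of `C 0`, and distribute the remaining `(k - 1) L` parent slots
arbitrarily over the remaining capacity: this splits `C` into `L` budgets `d l` with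
`1 ≤ d l 0` and `k ≤ ∑ i, d l i`. Such a budget is realised by a caterpillar: the vertices
of positive budget form a path in index order starting at the root, and each vertex of zero
budget hangs on a spare slot of a path vertex. There are enough spare slots because the path
uses only one slot of each of its vertices except the last.
-/

open Finset

theorem exists_iterate_eq_of_rank_lt {V : Type*} {T : V → V} {r : V} (ρ : V → ℕ)
    (hρ : ∀ j ≠ r, ρ (T j) < ρ j) (j : V) : ∃ t, T^[t] j = r := by
  induction hj : ρ j using Nat.strong_induction_on generalizing j with
  | _ n ih =>
    by_cases hjr : j = r
    · exact ⟨0, hjr⟩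
    · obtain ⟨t, ht⟩ := ih _ (hj ▸ hρ j hjr) (T j) rfl
      exact ⟨t + 1, ht⟩

theorem exists_card_fiber_le_of_card_le_sum {α β : Type*} [Fintype β] [DecidableEq β]
    [Nonempty β] (s : Finset α) (c : β → ℕ) (hs : #s ≤ ∑ b, c b) :
    ∃ f : α → β, ∀ b, #{a ∈ s | f a = b} ≤ c b := by
  classical
  obtain ⟨e⟩ : Nonempty (s ↪ Σ b, Fin (c b)) :=
    Function.Embedding.nonempty_of_card_le (by simpa using hs)
  refine ⟨fun a => if h : a ∈ s then (e ⟨a, h⟩).1 else Classical.arbitrary β, fun b => ?_⟩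
  calc #{a ∈ s | _ = b}
      ≤ Fintype.card {x : Σ b, Fin (c b) // x.1 = b} := by
        rw [← Fintype.card_coe]
        refine Fintype.card_le_of_embedding
          ⟨fun a => ⟨e ⟨a, (mem_filter.1 a.2).1⟩, ?_⟩, fun a a' h => ?_⟩
        · have := (mem_filter.1 a.2).2
          simpa [(mem_filter.1 a.2).1] using this
        · simpa using e.injective (Subtype.ext_iff.1 h)
    _ = c b := by simp [Fintype.card_congr (Equiv.sigmaSubtype b)]

theorem exists_budgets_of_le_sum {β : Type*} [Fintype β] [DecidableEq β] (C : β → ℕ) (b₀ : β)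
    {n L : ℕ} (h0 : L ≤ C b₀) (hsum : n * L ≤ ∑ b, C b) :
    ∃ d : Fin L → β → ℕ, (∀ l, 1 ≤ d l b₀) ∧ (∀ l, n ≤ ∑ b, d l b) ∧ ∀ b, ∑ l, d l b ≤ C b := by
  have : Nonempty β := ⟨b₀⟩
  have hle : Pi.single b₀ L ≤ C := by
    intro b
    rcases eq_or_ne b b₀ with rfl | hb <;> simp [*]
  obtain ⟨f, hf⟩ := exists_card_fiber_le_of_card_le_sum (univ : Finset (Fin L × Fin (n - 1)))
    (C - Pi.single b₀ L) (by
      rw [Pi.sub_def, sum_tsub_distrib _ fun b _ => hle b, sum_pi_single']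
      simp only [card_univ, Fintype.card_prod, Fintype.card_fin, mem_univ, if_true]
      rcases n with _ | n
      · simp
      · simp only [Nat.add_sub_cancel, Nat.succ_mul] at hsum ⊢
        exact Nat.le_sub_of_add_le (by rwa [Nat.mul_comm] at hsum))
  refine ⟨fun l b => (Pi.single b₀ 1 : β → ℕ) b + #{m | f (l, m) = b}, fun l => by simp,
    fun l => ?_, fun b => ?_⟩
  · rw [sum_add_distrib, ← card_eq_sum_card_fiberwise fun _ _ => mem_univ _]
    simp only [sum_pi_single', mem_univ, ↓reduceIte, card_univ, Fintype.card_fin]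
    omega
  · calc ∑ l, ((Pi.single b₀ 1 : β → ℕ) b + #{m | f (l, m) = b})
        = (Pi.single b₀ L : β → ℕ) b + #{p | f p = b} := by
          rw [sum_add_distrib]
          congr 1
          · rcases eq_or_ne b b₀ with rfl | hb <;> simp [*]
          · simp only [card_filter]
            exact (Fintype.sum_prod_type fun p => if f p = b then 1 else 0).symm
      _ ≤ (Pi.single b₀ L : β → ℕ) b + (C - Pi.single b₀ L : β → ℕ) b :=
          Nat.add_le_add_left (hf b) _
      _ = C b := add_tsub_cancel_of_le (hle b)

section Arborescence

variable {k : ℕ} (d : Fin (k + 1) → ℕ)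

noncomputable def prevPositive (j : Fin (k + 1)) : Fin (k + 1) :=
  ({i | 0 < d i ∧ i < j} : Finset _).sup id

variable {d}

theorem prevPositive_lt {j : Fin (k + 1)} (hj : j ≠ 0) : prevPositive d j < j :=
  (Finset.sup_lt_iff (bot_lt_iff_ne_bot.2 hj)).2 fun _ hi => (mem_filter.1 hi).2.2

theorem pos_prevPositive (h0 : 0 < d 0) {j : Fin (k + 1)} (hj : j ≠ 0) :
    0 < d (prevPositive d j) := by
  obtain ⟨i, hi, hsup⟩ := exists_mem_eq_sup ({i | 0 < d i ∧ i < j} : Finset _)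
    ⟨0, by simpa [h0] using Fin.pos_iff_ne_zero.2 hj⟩ id
  rw [prevPositive, hsup]
  exact (mem_filter.1 hi).2.1

theorem prevPositive_strictMonoOn : StrictMonoOn (prevPositive d) {j | 0 < d j ∧ j ≠ 0} :=
  fun j ⟨hj, hj0⟩ _ _ hlt =>
    (prevPositive_lt hj0).trans_le (le_sup (f := id) (by simp [hj, hlt]))

theorem card_prevPositive_fiber_le (h0 : 0 < d 0) (i : Fin (k + 1)) :
    #{j | 0 < d j ∧ j ≠ 0 ∧ prevPositive d j = i} ≤ d i := by
  rcases Nat.eq_zero_or_pos (d i) with hi | hi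
  · rw [hi, Nat.le_zero, card_eq_zero, filter_eq_empty_iff]
    rintro j - ⟨-, hj0, hj⟩
    exact (pos_prevPositive h0 hj0).ne' (hj ▸ hi)
  · refine le_trans (card_le_one.2 fun j hj j' hj' => ?_) hi
    simp only [mem_filter, mem_univ, true_and] at hj hj'
    exact prevPositive_strictMonoOn.injOn ⟨hj.1, hj.2.1⟩ ⟨hj'.1, hj'.2.1⟩
      (hj.2.2.trans hj'.2.2.symm)

theorem exists_arborescence_of_le_sum (h0 : 1 ≤ d 0) (hsum : k ≤ ∑ i, d i) :
    ∃ T : Fin (k + 1) → Fin (k + 1),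
      (∀ j, ∃ t, T^[t] j = 0) ∧ ∀ i, #{j | j ≠ 0 ∧ T j = i} ≤ d i := by
  set u : Fin (k + 1) → ℕ := fun i => #{j | 0 < d j ∧ j ≠ 0 ∧ prevPositive d j = i}
  have hu : ∀ i, u i ≤ d i := card_prevPositive_fiber_le h0
  have hsum_u : ∑ i, u i = #{j | 0 < d j ∧ j ≠ 0} := by
    rw [card_eq_sum_card_fiberwise (f := prevPositive d) (t := univ) (fun _ _ => mem_univ _)]
    simp only [u, filter_filter, and_assoc]
  have hcard : #{j | d j = 0} + #{j | 0 < d j ∧ j ≠ 0} ≤ k := by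
    rw [← card_union_of_disjoint (disjoint_filter.2 fun j _ hj => by omega)]
    refine (card_le_card (t := univ.erase 0) fun j hj => ?_).trans (by simp)
    simp only [mem_union, mem_filter, mem_univ, true_and, mem_erase, and_true] at hj ⊢
    rintro rfl
    omega
  obtain ⟨f, hf⟩ := exists_card_fiber_le_of_card_le_sum {j | d j = 0} (d - u)
    (by rw [Pi.sub_def, sum_tsub_distrib _ fun i _ => hu i]; omega)
  refine ⟨fun j => if d j = 0 then f j else prevPositive d j,
    exists_iterate_eq_of_rank_lt (fun j => if d j = 0 then k + 1 else j) fun j hj => ?_,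
    fun i => ?_⟩
  · by_cases hdj : d j = 0
    · -- `f` never hits a zero-budget vertex: its spare capacity `d - u` vanishes.
      have hf_pos : d (f j) ≠ 0 := fun h => by
        have := hf (f j)
        simp only [Pi.sub_apply, h, zero_tsub, Nat.le_zero, card_eq_zero,
          filter_eq_empty_iff] at this
        exact this (by simpa using hdj) rfl
      simpa [hdj, hf_pos] using (f j).is_le
    · simp [hdj, (pos_prevPositive h0 hj).ne', prevPositive_lt hj]
  · calc #{j | j ≠ 0 ∧ (if d j = 0 then f j else prevPositive d j) = i}
        ≤ #((({j | d j = 0} : Finset _).filter (f · = i)) ∪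
            ({j | 0 < d j ∧ j ≠ 0 ∧ prevPositive d j = i} : Finset _)) := by
          refine card_le_card fun j hj => ?_
          simp only [mem_filter, mem_univ, true_and, mem_union] at hj ⊢
          split_ifs at hj with hdj
          · exact Or.inl ⟨hdj, hj.2⟩
          · exact Or.inr ⟨Nat.pos_of_ne_zero hdj, hj⟩
      _ ≤ (d i - u i) + u i := (card_union_le _ _).trans (Nat.add_le_add_right (hf i) _)
      _ = d i := tsub_add_cancel_of_le (hu i)

end Arborescence

theorem stmt_1_general (k : ℕ) (C : Fin (k + 1) → ℕ) (L : ℕ)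
    (hC0 : L ≤ C 0) (hsum : k * L ≤ ∑ i, C i) :
    ∃ T : Fin L → Fin (k + 1) → Fin (k + 1),
      (∀ l : Fin L, ∀ i : Fin (k + 1), i ≠ 0 → ∃ t : ℕ, (T l)^[t] i = 0) ∧
      (∀ i : Fin (k + 1),
        (∑ j : Fin (k + 1),
          (Finset.univ.filter fun l : Fin L => j ≠ 0 ∧ T l j = i).card) ≤ C i) := by
  obtain ⟨d, hroot, hsize, hcap⟩ := exists_budgets_of_le_sum C 0 hC0 hsum
  choose T hreach hdeg using fun l => exists_arborescence_of_le_sum (hroot l) (hsize l)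
  refine ⟨T, fun l i _ => hreach l i, fun i => ?_⟩
  calc ∑ j, #{l | j ≠ 0 ∧ T l j = i} = ∑ l, #{j | j ≠ 0 ∧ T l j = i} := by
        simp only [card_filter]
        exact sum_comm
    _ ≤ ∑ l, d l i := sum_le_sum fun l _ => hdeg l i
    _ ≤ C i := hcap i

/-- Lemma 2 (integer form): if `C 0 ≥ L` and `∑ i, C i ≥ k * L`, there is an
integer edge-capacity assignment on the complete digraph on `{v_0,...,v_k}`
that decomposes into `L` spanning arborescences rooted at `v_0` (each encoded
by a parent function, every non-root vertex reaching the root, hence having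
in-degree 1), such that the total capacity of edges leaving each node `i`
(counted over all `L` arborescences) is at most `C i`. -/
theorem stmt_1 (k : ℕ) (C : Fin (k + 1) → ℕ) (L : ℕ)
    (hC0pos : 1 ≤ C 0) (hC0 : L ≤ C 0) (hsum : k * L ≤ ∑ i, C i) :
    ∃ T : Fin L → Fin (k + 1) → Fin (k + 1),
      (∀ l : Fin L, ∀ i : Fin (k + 1), i ≠ 0 → ∃ t : ℕ, (T l)^[t] i = 0) ∧
      (∀ i : Fin (k + 1),
        (∑ j : Fin (k + 1),
          (Finset.univ.filter fun l : Fin L => j ≠ 0 ∧ T l j = i).card) ≤ C i) :=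
  stmt_1_general k C L hC0 hsum
end

section
/- (Margin update, case j < m) In the setting of the routing achievability proof: after reducing rate L_M by N/(|X_M|-1), reducing source capacity C_0 by N/(|X_M|-1), and reducing each capacity C_i for p_i ∈ X_1 \ X_m by C_{iM} (where Σ_{p_i ∈ X_1\X_m} C_{iM} = |X_M| N/(|X_M|-1)), the updated margin for any j < m equals N_j' = N_j - N + Σ_{p_i ∈ X_j \ X_m} C_{iM}. In particular, if Σ_{p_i ∈ X_j \ X_m} C_{iM} ≤ N - N_j, then N_j' ≤ 0. -/
/-! Only the rate `L M`, the source capacity `C p0` and the capacities outside `X m` change.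
For `j < m ≤ M`, the index `M` lies in the rate sum `Icc j n` with weight `|X M|` and `p0 ∈ X m ⊆ X j`,
so with `δ = Nv / (|X M| - 1)` the margin drops by `|X M| δ` on the rates and rises by
`δ + ∑_{X j \ X m} CM` on the capacities; the net change is `-(|X M| - 1) δ + ∑ CM = -Nv + ∑ CM`. -/

open Finset

theorem Finset.sum_eq_sum_sub_of_eq_except {ι G : Type*} [AddCommGroup G] [DecidableEq ι]
    {s : Finset ι} {f g : ι → G} {a : ι} (ha : a ∈ s) (d : G) (hga : g a = f a - d)
    (hg : ∀ i ∈ s, i ≠ a → g i = f i) :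
    ∑ i ∈ s, g i = ∑ i ∈ s, f i - d := by
  rw [← add_sum_erase s g ha, ← add_sum_erase s f ha, hga,
    sum_congr rfl fun i hi => hg i (mem_of_mem_erase hi) (ne_of_mem_erase hi)]
  abel

theorem antitoneOn_Icc_of_succ_subset {α : Type*} {X : ℕ → Finset α} {a b : ℕ}
    (h : ∀ i, a ≤ i → i < b → X (i + 1) ⊆ X i) : AntitoneOn X (Set.Icc a b) :=
  antitoneOn_of_succ_le Set.ordConnected_Icc fun i _ hi hi' => h i hi.1 (by simpa using hi'.2)

theorem stmt_9_general {α : Type*} [DecidableEq α] (n : ℕ) (p0 : α)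
    (X : ℕ → Finset α)
    (hnested : ∀ j, 1 ≤ j → j ≤ n → X (j + 1) ⊆ X j)
    (hp0 : ∀ j, 1 ≤ j → j ≤ n + 1 → p0 ∈ X j)
    (C : α → ℝ) (L : ℕ → ℝ)
    (N : ℕ → ℝ)
    (hNdef : ∀ j, 1 ≤ j → j ≤ n →
      N j = (∑ i ∈ Finset.Icc j n, ((X i).card : ℝ) * L i)
            + (∑ i ∈ Finset.Icc 1 (j - 1), L i) - ∑ p ∈ X j, C p)
    (m M : ℕ) (hm1 : 1 ≤ m) (hmM : m ≤ M) (hMn : M ≤ n)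
    (hcardM : 2 ≤ (X M).card)
    (Nv : ℝ)
    (CM : α → ℝ)
    (C' : α → ℝ) (L' : ℕ → ℝ)
    (hC'p0 : C' p0 = C p0 - Nv / (((X M).card : ℝ) - 1))
    (hC'in : ∀ p ∈ X m, p ≠ p0 → C' p = C p)
    (hC'out : ∀ p ∈ X 1, p ∉ X m → C' p = C p - CM p)
    (hL'M : L' M = L M - Nv / (((X M).card : ℝ) - 1))
    (hL'other : ∀ i, i ≠ M → L' i = L i)
    (j : ℕ) (hj1 : 1 ≤ j) (hjm : j < m) :
    ((∑ i ∈ Finset.Icc j n, ((X i).card : ℝ) * L' i)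
      + (∑ i ∈ Finset.Icc 1 (j - 1), L' i) - ∑ p ∈ X j, C' p)
      = N j - Nv + ∑ p ∈ X j \ X m, CM p ∧
    ((∑ p ∈ X j \ X m, CM p ≤ Nv - N j) →
      ((∑ i ∈ Finset.Icc j n, ((X i).card : ℝ) * L' i)
        + (∑ i ∈ Finset.Icc 1 (j - 1), L' i) - ∑ p ∈ X j, C' p) ≤ 0) := by
  set δ := Nv / (((X M).card : ℝ) - 1)
  have hX : AntitoneOn X (Set.Icc 1 (n + 1)) :=
    antitoneOn_Icc_of_succ_subset fun i hi hin => hnested i hi (by omega)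
  have hXmj : X m ⊆ X j := hX ⟨hj1, by omega⟩ ⟨hm1, by omega⟩ hjm.le
  have hXj1 : X j ⊆ X 1 := hX ⟨le_rfl, by omega⟩ ⟨hj1, by omega⟩ hj1
  have hrates : ∑ i ∈ Icc j n, ((X i).card : ℝ) * L' i
      = ∑ i ∈ Icc j n, ((X i).card : ℝ) * L i - (X M).card * δ :=
    sum_eq_sum_sub_of_eq_except (mem_Icc.2 ⟨by omega, hMn⟩) _ (by rw [hL'M]; ring)
      fun i _ hi => by rw [hL'other i hi]
  have hprefix : ∑ i ∈ Icc 1 (j - 1), L' i = ∑ i ∈ Icc 1 (j - 1), L i :=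
    sum_congr rfl fun i hi => hL'other i (by grind)
  have hinner : ∑ p ∈ X m, C' p = ∑ p ∈ X m, C p - δ :=
    sum_eq_sum_sub_of_eq_except (hp0 m hm1 (by omega)) _ hC'p0 hC'in
  have houter : ∑ p ∈ X j \ X m, C' p = ∑ p ∈ X j \ X m, C p - ∑ p ∈ X j \ X m, CM p := by
    rw [← sum_sub_distrib]
    exact sum_congr rfl fun p hp => hC'out p (hXj1 (mem_sdiff.1 hp).1) (mem_sdiff.1 hp).2
  have hδ : (X M).card * δ - δ = Nv := by
    have hcard : ((X M).card : ℝ) - 1 ≠ 0 := by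
      have : (2 : ℝ) ≤ (X M).card := by exact_mod_cast hcardM
      linarith
    simp only [δ]
    field_simp
  have key : (∑ i ∈ Icc j n, ((X i).card : ℝ) * L' i) + (∑ i ∈ Icc 1 (j - 1), L' i)
      - ∑ p ∈ X j, C' p = N j - Nv + ∑ p ∈ X j \ X m, CM p := by
    rw [hNdef j hj1 (by omega), hrates, hprefix, ← sum_sdiff hXmj, ← sum_sdiff hXmj (f := C),
      houter, hinner]
    linarith
  exact ⟨key, fun h => by rw [key]; linarith⟩

/-- Margin update for `j < m` in the routing achievability proof. After
reducing rate `L M` and source capacity `C p0` by `Nv / (|X M| - 1)` and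
reducing each capacity `C p` for `p ∈ X 1 \ X m` by `CM p` (with
`∑_{p ∈ X 1 \ X m} CM p = |X M| * Nv / (|X M| - 1)`), the updated margin for
`j < m` equals `N j - Nv + ∑_{p ∈ X j \ X m} CM p`; in particular it is `≤ 0`
whenever `∑_{p ∈ X j \ X m} CM p ≤ Nv - N j`. -/
theorem stmt_9 {α : Type*} [DecidableEq α] (n : ℕ) (hn : 1 ≤ n) (p0 : α)
    (X : ℕ → Finset α) (hXtop : X (n + 1) = {p0})
    (hnested : ∀ j, 1 ≤ j → j ≤ n → X (j + 1) ⊆ X j)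
    (hp0 : ∀ j, 1 ≤ j → j ≤ n + 1 → p0 ∈ X j)
    (C : α → ℝ) (L : ℕ → ℝ)
    (N : ℕ → ℝ)
    (hNdef : ∀ j, 1 ≤ j → j ≤ n →
      N j = (∑ i ∈ Finset.Icc j n, ((X i).card : ℝ) * L i)
            + (∑ i ∈ Finset.Icc 1 (j - 1), L i) - ∑ p ∈ X j, C p)
    (m M : ℕ) (hm1 : 1 ≤ m) (hmM : m ≤ M) (hMn : M ≤ n)
    (hcardM : 2 ≤ (X M).card)
    (Nv : ℝ) (hNv : 0 < Nv)
    (CM : α → ℝ) (hCM0 : ∀ p ∈ X 1 \ X m, 0 ≤ CM p)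
    (hCMsum : ∑ p ∈ X 1 \ X m, CM p = ((X M).card : ℝ) * Nv / (((X M).card : ℝ) - 1))
    (C' : α → ℝ) (L' : ℕ → ℝ)
    (hC'p0 : C' p0 = C p0 - Nv / (((X M).card : ℝ) - 1))
    (hC'in : ∀ p ∈ X m, p ≠ p0 → C' p = C p)
    (hC'out : ∀ p ∈ X 1, p ∉ X m → C' p = C p - CM p)
    (hL'M : L' M = L M - Nv / (((X M).card : ℝ) - 1))
    (hL'other : ∀ i, i ≠ M → L' i = L i)
    (j : ℕ) (hj1 : 1 ≤ j) (hjm : j < m) :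
    ((∑ i ∈ Finset.Icc j n, ((X i).card : ℝ) * L' i)
      + (∑ i ∈ Finset.Icc 1 (j - 1), L' i) - ∑ p ∈ X j, C' p)
      = N j - Nv + ∑ p ∈ X j \ X m, CM p ∧
    ((∑ p ∈ X j \ X m, CM p ≤ Nv - N j) →
      ((∑ i ∈ Finset.Icc j n, ((X i).card : ℝ) * L' i)
        + (∑ i ∈ Finset.Icc 1 (j - 1), L' i) - ∑ p ∈ X j, C' p) ≤ 0) :=
  stmt_9_general n p0 X hnested hp0 C L N hNdef m M hm1 hmM hMn hcardM Nv CM C' L' hC'p0 hC'in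
    hC'out hL'M hL'other j hj1 hjm
end

section
/- (Margin update, cases m ≤ j ≤ M and j > M) In the setting of the routing achievability proof: with the updates L_M' = L_M - N/(|X_M|-1), C_0' = C_0 - N/(|X_M|-1), C_i' = C_i - C_{iM} for p_i ∈ X_1 \ X_m with Σ C_{iM} = |X_M| N/(|X_M|-1), and C_i' = C_i for p_i ∈ X_m \ {p_0}, the updated margins satisfy: N_j' = N_j - N for all m ≤ j ≤ M, and N_j' = N_j for all j > M. -/
/-! For `j ≥ m` the set `X j` lies inside `X m`, so among the peers of `X j` only the source
`p0` has its capacity lowered, by `δ = Nv / (|X M| - 1)`. Lowering `L M` by `δ` lowers the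
margin by `|X M| δ` when `j ≤ M` (where `L M` enters with weight `|X M|`) and by `δ` when
`j > M` (where it enters with weight `1`). Together with the `+δ` from the source this gives
`-(|X M| - 1) δ = -Nv` and `0` respectively. -/

open Finset

lemma Finset.sum_eq_sum_sub_ite_of_eqOn_erase {ι R : Type*} [DecidableEq ι] [AddCommGroup R]
    (s : Finset ι) {f g : ι → R} {a : ι} {d : R} (ha : g a = f a - d)
    (hs : ∀ i ∈ s, i ≠ a → g i = f i) :
    ∑ i ∈ s, g i = ∑ i ∈ s, f i - if a ∈ s then d else 0 := by
  rw [← sum_pi_single' a d s, ← sum_sub_distrib]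
  refine sum_congr rfl fun i hi => ?_
  by_cases hia : i = a
  · subst hia
    simp [ha]
  · simp [hs i hi hia, hia]

lemma antitoneOn_Icc_of_succ_subset_s10 {α : Type*} {X : ℕ → Finset α} {n : ℕ}
    (hX : ∀ j, 1 ≤ j → j ≤ n → X (j + 1) ⊆ X j) : AntitoneOn X (Set.Icc 1 (n + 1)) :=
  antitoneOn_of_succ_le Set.ordConnected_Icc fun j _ hj hj' => by
    rw [Order.succ_eq_add_one] at hj' ⊢
    exact hX j hj.1 (by simpa using hj'.2)

/-- The paper's margin `N_j`. -/
def margin {α : Type*} (X : ℕ → Finset α) (L : ℕ → ℝ) (C : α → ℝ) (n j : ℕ) : ℝ :=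
  (∑ i ∈ Icc j n, ((X i).card : ℝ) * L i) + (∑ i ∈ Icc 1 (j - 1), L i) - ∑ p ∈ X j, C p

section MarginUpdate

variable {α : Type*} {X : ℕ → Finset α} {L L' : ℕ → ℝ} {C C' : α → ℝ} {n j M : ℕ} {p0 : α}
  {δ : ℝ}

lemma sum_card_mul_update (s : Finset ℕ) (hL'M : L' M = L M - δ)
    (hL' : ∀ i, i ≠ M → L' i = L i) :
    ∑ i ∈ s, ((X i).card : ℝ) * L' i
      = ∑ i ∈ s, ((X i).card : ℝ) * L i - if M ∈ s then ((X M).card : ℝ) * δ else 0 :=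
  s.sum_eq_sum_sub_ite_of_eqOn_erase (by rw [hL'M, mul_sub]) fun i _ hi => by rw [hL' i hi]

variable [DecidableEq α]

lemma sum_capacity_update (hp0 : p0 ∈ X j) (hC'p0 : C' p0 = C p0 - δ)
    (hC' : ∀ p ∈ X j, p ≠ p0 → C' p = C p) :
    ∑ p ∈ X j, C' p = ∑ p ∈ X j, C p - δ := by
  rw [(X j).sum_eq_sum_sub_ite_of_eqOn_erase hC'p0 hC', if_pos hp0]

lemma margin_update_of_le (hL'M : L' M = L M - δ) (hL' : ∀ i, i ≠ M → L' i = L i)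
    (hp0 : p0 ∈ X j) (hC'p0 : C' p0 = C p0 - δ) (hC' : ∀ p ∈ X j, p ≠ p0 → C' p = C p)
    (hjM : j ≤ M) (hMn : M ≤ n) :
    margin X L' C' n j = margin X L C n j - (((X M).card : ℝ) - 1) * δ := by
  have hM : M ∈ Icc j n := mem_Icc.mpr ⟨hjM, hMn⟩
  have hM' : M ∉ Icc 1 (j - 1) := by simp only [mem_Icc]; omega
  simp only [margin]
  rw [sum_card_mul_update _ hL'M hL', sum_eq_sum_sub_ite_of_eqOn_erase _ hL'M
    fun i _ hi => hL' i hi, sum_capacity_update hp0 hC'p0 hC', if_pos hM, if_neg hM']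
  ring

lemma margin_update_of_lt (hL'M : L' M = L M - δ) (hL' : ∀ i, i ≠ M → L' i = L i)
    (hp0 : p0 ∈ X j) (hC'p0 : C' p0 = C p0 - δ) (hC' : ∀ p ∈ X j, p ≠ p0 → C' p = C p)
    (hM1 : 1 ≤ M) (hMj : M < j) :
    margin X L' C' n j = margin X L C n j := by
  have hM : M ∉ Icc j n := by simp only [mem_Icc]; omega
  have hM' : M ∈ Icc 1 (j - 1) := by simp only [mem_Icc]; omega
  simp only [margin]
  rw [sum_card_mul_update _ hL'M hL', sum_eq_sum_sub_ite_of_eqOn_erase _ hL'M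
    fun i _ hi => hL' i hi, sum_capacity_update hp0 hC'p0 hC', if_neg hM, if_pos hM']
  ring

end MarginUpdate
theorem stmt_10_general {α : Type*} [DecidableEq α] (n : ℕ) (p0 : α)
    (X : ℕ → Finset α)
    (hnested : ∀ j, 1 ≤ j → j ≤ n → X (j + 1) ⊆ X j)
    (hp0 : ∀ j, 1 ≤ j → j ≤ n + 1 → p0 ∈ X j)
    (C : α → ℝ) (L : ℕ → ℝ)
    (N : ℕ → ℝ)
    (hNdef : ∀ j, 1 ≤ j → j ≤ n →
      N j = (∑ i ∈ Finset.Icc j n, ((X i).card : ℝ) * L i)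
            + (∑ i ∈ Finset.Icc 1 (j - 1), L i) - ∑ p ∈ X j, C p)
    (m M : ℕ) (hm1 : 1 ≤ m) (hmM : m ≤ M) (hMn : M ≤ n)
    (hcardM : 2 ≤ (X M).card)
    (Nv : ℝ)
    (C' : α → ℝ) (L' : ℕ → ℝ)
    (hC'p0 : C' p0 = C p0 - Nv / (((X M).card : ℝ) - 1))
    (hC'in : ∀ p ∈ X m, p ≠ p0 → C' p = C p)
    (hL'M : L' M = L M - Nv / (((X M).card : ℝ) - 1))
    (hL'other : ∀ i, i ≠ M → L' i = L i) :
    (∀ j, m ≤ j → j ≤ M →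
      ((∑ i ∈ Finset.Icc j n, ((X i).card : ℝ) * L' i)
        + (∑ i ∈ Finset.Icc 1 (j - 1), L' i) - ∑ p ∈ X j, C' p) = N j - Nv) ∧
    (∀ j, M < j → j ≤ n →
      ((∑ i ∈ Finset.Icc j n, ((X i).card : ℝ) * L' i)
        + (∑ i ∈ Finset.Icc 1 (j - 1), L' i) - ∑ p ∈ X j, C' p) = N j) := by
  have hδ : (((X M).card : ℝ) - 1) * (Nv / (((X M).card : ℝ) - 1)) = Nv := by
    have : (2 : ℝ) ≤ (X M).card := by exact_mod_cast hcardM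
    exact mul_div_cancel₀ _ (by linarith)
  have hC' : ∀ j, m ≤ j → j ≤ n → ∀ p ∈ X j, p ≠ p0 → C' p = C p := fun j hmj hjn p hp =>
    hC'in p (antitoneOn_Icc_of_succ_subset_s10 hnested ⟨hm1, by omega⟩ ⟨by omega, by omega⟩ hmj hp)
  refine ⟨fun j hmj hjM => ?_, fun j hMj hjn => ?_⟩
  · rw [hNdef j (by omega) (by omega), ← hδ]
    exact margin_update_of_le hL'M hL'other (hp0 j (by omega) (by omega)) hC'p0
      (hC' j hmj (by omega)) hjM hMn
  · rw [hNdef j (by omega) hjn]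
    exact margin_update_of_lt hL'M hL'other (hp0 j (by omega) (by omega)) hC'p0
      (hC' j (by omega) hjn) (by omega) hMj

/-- Margin update for `m ≤ j ≤ M` and for `j > M` in the routing
achievability proof: with the updates `L' M = L M - Nv/(|X M| - 1)`,
`C' p0 = C p0 - Nv/(|X M| - 1)`, `C' p = C p - CM p` for `p ∈ X 1 \ X m`
(with `∑ CM = |X M| Nv/(|X M| - 1)`) and `C' p = C p` for `p ∈ X m \ {p0}`,
the updated margins satisfy `N' j = N j - Nv` for `m ≤ j ≤ M` and
`N' j = N j` for `M < j ≤ n`. -/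
theorem stmt_10 {α : Type*} [DecidableEq α] (n : ℕ) (hn : 1 ≤ n) (p0 : α)
    (X : ℕ → Finset α) (hXtop : X (n + 1) = {p0})
    (hnested : ∀ j, 1 ≤ j → j ≤ n → X (j + 1) ⊆ X j)
    (hp0 : ∀ j, 1 ≤ j → j ≤ n + 1 → p0 ∈ X j)
    (C : α → ℝ) (L : ℕ → ℝ)
    (N : ℕ → ℝ)
    (hNdef : ∀ j, 1 ≤ j → j ≤ n →
      N j = (∑ i ∈ Finset.Icc j n, ((X i).card : ℝ) * L i)
            + (∑ i ∈ Finset.Icc 1 (j - 1), L i) - ∑ p ∈ X j, C p)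
    (m M : ℕ) (hm1 : 1 ≤ m) (hmM : m ≤ M) (hMn : M ≤ n)
    (hcardM : 2 ≤ (X M).card)
    (Nv : ℝ) (hNv : 0 < Nv)
    (CM : α → ℝ) (hCM0 : ∀ p ∈ X 1 \ X m, 0 ≤ CM p)
    (hCMsum : ∑ p ∈ X 1 \ X m, CM p = ((X M).card : ℝ) * Nv / (((X M).card : ℝ) - 1))
    (C' : α → ℝ) (L' : ℕ → ℝ)
    (hC'p0 : C' p0 = C p0 - Nv / (((X M).card : ℝ) - 1))
    (hC'in : ∀ p ∈ X m, p ≠ p0 → C' p = C p)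
    (hC'out : ∀ p ∈ X 1, p ∉ X m → C' p = C p - CM p)
    (hL'M : L' M = L M - Nv / (((X M).card : ℝ) - 1))
    (hL'other : ∀ i, i ≠ M → L' i = L i) :
    (∀ j, m ≤ j → j ≤ M →
      ((∑ i ∈ Finset.Icc j n, ((X i).card : ℝ) * L' i)
        + (∑ i ∈ Finset.Icc 1 (j - 1), L' i) - ∑ p ∈ X j, C' p) = N j - Nv) ∧
    (∀ j, M < j → j ≤ n →
      ((∑ i ∈ Finset.Icc j n, ((X i).card : ℝ) * L' i)
        + (∑ i ∈ Finset.Icc 1 (j - 1), L' i) - ∑ p ∈ X j, C' p) = N j) :=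
  stmt_10_general n p0 X hnested hp0 C L N hNdef m M hm1 hmM hMn hcardM Nv C' L' hC'p0 hC'in hL'M
    hL'other
end

section
/- (Dominant subsequence under uniform shift) Let N_1,...,N_{n+1} be reals with N_{n+1} = 0, let m = min{j : N_j > 0} and M = max{j : N_j > 0} exist, and let N = min(N_m, N_M) > 0. Define N_j' = N_j - N + e_j for j < m where 0 ≤ e_j and N_j' ≤ 0, N_j' = N_j - N for m ≤ j ≤ M, and N_j' = N_j for j > M (so N_j' ≤ 0 for j > M and N_{n+1}' = 0). Let N_{d_1},...,N_{d_h},N_{d_{h+1}} be the dominant subsequence of N_1,...,N_{n+1} (so d_{h+1} = n+1, d_h = M). Then the positive part of the dominant subsequence of N' is (N_{d_1} - N, ..., N_{d_h} - N) with the same indices, where terms equal to 0 may be dropped; in particular every dominant index of N' with positive value is a dominant index of N, and N_{d_t}' = N_{d_t} - N for each such index. -/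
/-- Behaviour of the dominant subsequence under the uniform shift by
`Nv = min (N m) (N M)`. An index `i ∈ {1,...,n+1}` is dominant for a sequence
`a` iff `a j < a i` for all `i < j ≤ n+1`. Conclusions: every dominant index
of `N'` with positive value is a dominant index of `N` and there
`N' i = N i - Nv`; conversely every dominant index `i` of `N` with
`N i - Nv > 0` is a dominant index of `N'`. -/
theorem stmt_11 (n : ℕ) (N N' : ℕ → ℝ) (e : ℕ → ℝ)
    (hNtop : N (n + 1) = 0)
    (m M : ℕ) (hm1 : 1 ≤ m) (hmM : m ≤ M) (hMn : M ≤ n)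
    (hNm : 0 < N m) (hNM : 0 < N M)
    (hminmax : ∀ j, 1 ≤ j → j ≤ n + 1 → 0 < N j → m ≤ j ∧ j ≤ M)
    (h1 : ∀ j, 1 ≤ j → j < m →
      N' j = N j - min (N m) (N M) + e j ∧ 0 ≤ e j ∧ N' j ≤ 0)
    (h2 : ∀ j, m ≤ j → j ≤ M → N' j = N j - min (N m) (N M))
    (h3 : ∀ j, M < j → j ≤ n + 1 → N' j = N j) :
    (∀ i, 1 ≤ i → i ≤ n + 1 → 0 < N' i →
      (∀ j, i < j → j ≤ n + 1 → N' j < N' i) →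
      (∀ j, i < j → j ≤ n + 1 → N j < N i) ∧ N' i = N i - min (N m) (N M)) ∧
    (∀ i, 1 ≤ i → i ≤ n + 1 → 0 < N i - min (N m) (N M) →
      (∀ j, i < j → j ≤ n + 1 → N j < N i) →
      (∀ j, i < j → j ≤ n + 1 → N' j < N' i)) := by

  have hNvpos : 0 < min (N m) (N M) := lt_min hNm hNM
  have hle0 : ∀ j, 1 ≤ j → j ≤ n + 1 → M < j → N j ≤ 0 := by
    intro j hj1 hjn hMj
    by_contra h
    push_neg at h
    exact absurd ((hminmax j hj1 hjn h).2) (not_le.mpr hMj)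
  constructor
  · intro i hi1 hin hpos hdom
    have him : m ≤ i := by
      by_contra h
      push_neg at h
      have := (h1 i hi1 h).2.2
      linarith
    have hiM : i ≤ M := by
      by_contra h
      push_neg at h
      have hNi := h3 i h hin
      have := hle0 i hi1 hin h
      linarith
    have hN'i : N' i = N i - min (N m) (N M) := h2 i him hiM
    refine ⟨?_, hN'i⟩
    intro j hij hjn
    have hj1 : 1 ≤ j := by omega
    by_cases hjM : j ≤ M
    · have hm_j : m ≤ j := le_trans him (le_of_lt hij)
      have := h2 j hm_j hjM
      have := hdom j hij hjn
      linarith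
    · push_neg at hjM
      have := hle0 j hj1 hjn hjM
      linarith
  · intro i hi1 hin hpos hdom j hij hjn
    have hNi : 0 < N i := by linarith
    obtain ⟨him, hiM⟩ := hminmax i hi1 hin hNi
    have hN'i : N' i = N i - min (N m) (N M) := h2 i him hiM
    have hj1 : 1 ≤ j := by omega
    by_cases hjM : j ≤ M
    · have hm_j : m ≤ j := le_trans him (le_of_lt hij)
      have := h2 j hm_j hjM
      have := hdom j hij hjn
      linarith
    · push_neg at hjM
      have h3' := h3 j hjM hjn
      have := hle0 j hj1 hjn hjM
      linarith
end

section
/- (Preservation of the capacity inequality) Suppose Σ_{p_i ∈ X_1} C_i ≥ Σ_{i=1}^n |X_i| L_i + Σ_{t=1}^h (N_{d_t} - N_{d_{t+1}})/(|X_{d_t}| - 1), where N_{d_1},...,N_{d_{h+1}} is the dominant subsequence of the margins (N_{d_{h+1}} = 0, d_h = M). Let N > 0, |X_M| ≥ 2, and perform the updates: total capacity decreases by (|X_M|+1)N/(|X_M|-1) (i.e., Σ C_i' = Σ C_i - N/(|X_M|-1) - |X_M|N/(|X_M|-1)), rates change only in L_M' = L_M - N/(|X_M|-1) (so Σ |X_i|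 L_i' = Σ |X_i| L_i - |X_M| N/(|X_M|-1)), and the dominant values become N_{d_t}' = N_{d_t} - N for t = 1,...,h with N_{d_{h+1}}' = 0. Then Σ_{p_i ∈ X_1} C_i' ≥ Σ_{i=1}^n |X_i| L_i' + Σ_{t=1}^h (N_{d_t}' - N_{d_{t+1}}')/(|X_{d_t}| - 1). -/
open Finset

theorem sum_Icc_sub_succ_div_of_shift {K : Type*} [Field K] (f g d : ℕ → K) (c : K) {h : ℕ}
    (hh : 1 ≤ h) (hg : ∀ t ∈ Icc 1 h, g t = f t - c) (htop : g (h + 1) = f (h + 1)) :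
    ∑ t ∈ Icc 1 h, (g t - g (t + 1)) / d t
      = ∑ t ∈ Icc 1 h, (f t - f (t + 1)) / d t - c / d h := by
  obtain ⟨k, rfl⟩ : ∃ k, h = k + 1 := ⟨h - 1, by omega⟩
  have hinner : ∑ t ∈ Icc 1 k, (g t - g (t + 1)) / d t
      = ∑ t ∈ Icc 1 k, (f t - f (t + 1)) / d t := by
    refine sum_congr rfl fun t ht => ?_
    obtain ⟨ht1, htk⟩ := mem_Icc.1 ht
    rw [hg t (mem_Icc.2 ⟨ht1, by omega⟩), hg (t + 1) (mem_Icc.2 ⟨by omega, by omega⟩)]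
    ring
  rw [sum_Icc_succ_top hh, sum_Icc_succ_top hh, hinner, hg (k + 1) (mem_Icc.2 ⟨hh, le_rfl⟩),
    htop]
  ring

theorem stmt_12_general (h : ℕ) (hh : 1 ≤ h) (Nv : ℝ)
    (cM : ℝ)
    (w : ℕ → ℝ) (hwh : w h = cM)
    (Nd : ℕ → ℝ) (hNd0 : Nd (h + 1) = 0)
    (S R : ℝ)
    (hcap : S ≥ R + ∑ t ∈ Finset.Icc 1 h, (Nd t - Nd (t + 1)) / (w t - 1))
    (S' R' : ℝ) (Nd' : ℕ → ℝ)
    (hS' : S' = S - Nv / (cM - 1) - cM * Nv / (cM - 1))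
    (hR' : R' = R - cM * Nv / (cM - 1))
    (hNd' : ∀ t, 1 ≤ t → t ≤ h → Nd' t = Nd t - Nv)
    (hNd'0 : Nd' (h + 1) = 0) :
    S' ≥ R' + ∑ t ∈ Finset.Icc 1 h, (Nd' t - Nd' (t + 1)) / (w t - 1) := by
  have hshift := sum_Icc_sub_succ_div_of_shift Nd Nd' (fun t => w t - 1) Nv hh
    (fun t ht => hNd' t (mem_Icc.1 ht).1 (mem_Icc.1 ht).2) (hNd'0.trans hNd0.symm)
  rw [hwh] at hshift
  rw [hshift, hS', hR']
  linarith

/-- Preservation of the capacity inequality under one reduction step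
(algebraic core of the induction in Theorem 2). `S` is the total capacity,
`R = ∑ |X i| L i` the total weighted rate, `Nd t` the dominant margin values
(`Nd (h+1) = 0`), and `w t = |X (d t)|` with `w h = |X M| = cM ≥ 2`. After
the update the inequality still holds with the shifted dominant values. -/
theorem stmt_12 (h : ℕ) (hh : 1 ≤ h) (Nv : ℝ) (hNv : 0 < Nv)
    (cM : ℝ) (hcM : 2 ≤ cM)
    (w : ℕ → ℝ) (hw : ∀ t, 1 ≤ t → t ≤ h → 2 ≤ w t) (hwh : w h = cM)
    (Nd : ℕ → ℝ) (hNd0 : Nd (h + 1) = 0)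
    (S R : ℝ)
    (hcap : S ≥ R + ∑ t ∈ Finset.Icc 1 h, (Nd t - Nd (t + 1)) / (w t - 1))
    (S' R' : ℝ) (Nd' : ℕ → ℝ)
    (hS' : S' = S - Nv / (cM - 1) - cM * Nv / (cM - 1))
    (hR' : R' = R - cM * Nv / (cM - 1))
    (hNd' : ∀ t, 1 ≤ t → t ≤ h → Nd' t = Nd t - Nv)
    (hNd'0 : Nd' (h + 1) = 0) :
    S' ≥ R' + ∑ t ∈ Finset.Icc 1 h, (Nd' t - Nd' (t + 1)) / (w t - 1) :=
  stmt_12_general h hh Nv cM w hwh Nd hNd0 S R hcap S' R' Nd' hS' hR' hNd' hNd'0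
end

section
/- (Single-resolution capacity, Lemma 2 as rate statement) Let k ≥ 1 and let C_0, C_1, ..., C_k, L be nonnegative rationals with C_0 ≥ L and C_0 + C_1 + ... + C_k ≥ kL. Then there exists a fractional flow assignment f : {0,...,k} × {1,...,k} → ℚ_{≥0} decomposable as a nonnegative rational combination Σ_T λ_T · (edge-indicator of T) over spanning arborescences T rooted at node 0 on nodes {0,...,k}, with Σ_T λ_T = L and Σ_{j} f(i,j) ≤ C_i for every node i. -/
/-- Lemma 2 as a fractional-rate statement: if `C 0 ≥ L` and
`C 0 + C 1 + ... + C k ≥ k * L` (nonnegative rationals), then there is a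
nonnegative rational weighting `lam` of spanning arborescences rooted at node
`0` on nodes `{0,...,k}` (arborescences encoded by parent functions `T` with
every nonzero node reaching the root, hence in-degree 1 for each non-root)
with total weight `L`, such that the induced flow out of each node `i`
(weight times out-degree, summed over arborescences) is at most `C i`. -/
theorem stmt_16 (k : ℕ) (hk : 1 ≤ k) (C : Fin (k + 1) → ℚ) (L : ℚ)
    (hCnn : ∀ i, 0 ≤ C i) (hLnn : 0 ≤ L) (hC0 : L ≤ C 0)
    (hsum : (k : ℚ) * L ≤ ∑ i, C i) :
    ∃ lam : (Fin (k + 1) → Fin (k + 1)) → ℚ,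
      (∀ T, 0 ≤ lam T) ∧
      (∀ T, lam T ≠ 0 → ∀ i : Fin (k + 1), i ≠ 0 → ∃ t : ℕ, T^[t] i = 0) ∧
      (∑ T, lam T = L) ∧
      (∀ i : Fin (k + 1),
        (∑ T, lam T *
          ((Finset.univ.filter fun j : Fin (k + 1) => j ≠ 0 ∧ T j = i).card : ℚ))
          ≤ C i) := by
  classical
  -- caps
  set a : Fin (k+1) → ℚ := fun j => if j = 0 then C 0 - L else C j with ha
  have hann : ∀ j, 0 ≤ a j := by
    intro j; simp only [ha]; split_ifs with h
    · linarith
    · exact hCnn j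
  set A : ℚ := ∑ j, a j with hA
  have hAval : A = (∑ i, C i) - L := by
    have h1 : ∀ j, a j = C j - (if j = 0 then L else 0) := by
      intro j; simp only [ha]; split_ifs with h
      · subst h; ring
      · ring
    simp only [hA, h1, Finset.sum_sub_distrib, Finset.sum_ite_eq' Finset.univ (0 : Fin (k+1)),
      Finset.mem_univ, if_true]
  have hAnn : 0 ≤ A := Finset.sum_nonneg fun j _ => hann j
  have hLA : ((k:ℚ) - 1) * L ≤ A := by rw [hAval]; nlinarith
  set w : Fin (k+1) → ℚ := fun j => if A = 0 then (if j = 0 then L else 0) else L * a j / A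
    with hw
  have hwnn : ∀ j, 0 ≤ w j := by
    intro j; simp only [hw]; split_ifs with h h2
    · exact hLnn
    · exact le_refl 0
    · exact div_nonneg (mul_nonneg hLnn (hann j)) hAnn
  have hwsum : ∑ j, w j = L := by
    by_cases h : A = 0
    · simp only [hw, h, if_true]
      simp [Finset.sum_ite_eq' Finset.univ (0 : Fin (k+1))]
    · simp only [hw, h, if_false]
      rw [← Finset.sum_div, ← Finset.mul_sum, ← hA, mul_div_assoc, div_self h, mul_one]
  have hwcap : ∀ j, w j * ((k:ℚ) - 1) ≤ a j := by
    intro j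
    by_cases h : A = 0
    · rcases Nat.lt_or_ge k 2 with h2 | h2
      · have hk1 : k = 1 := by omega
        subst hk1
        have hz : ((1:ℕ):ℚ) - 1 = 0 := by norm_num
        rw [hz, mul_zero]
        exact hann j
      · have hk2 : (2:ℚ) ≤ (k:ℚ) := by exact_mod_cast Nat.cast_le.mpr h2
        have hL0 : L = 0 := by nlinarith [hLA, h ▸ le_refl (0:ℚ)]
        simp only [hw, h, if_true, hL0]
        have h3 : (if j = 0 then (0:ℚ) else 0) = 0 := by split_ifs <;> rfl
        rw [h3, zero_mul]; exact hann j
    · have hApos : 0 < A := lt_of_le_of_ne hAnn (Ne.symm h)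
      simp only [hw, h, if_false]
      rw [div_mul_eq_mul_div, div_le_iff₀ hApos]
      nlinarith [mul_le_mul_of_nonneg_left hLA (hann j)]
  -- the trees
  set Tj : Fin (k+1) → Fin (k+1) → Fin (k+1) := fun j i => if i = j ∨ i = 0 then 0 else j
    with hTj
  refine ⟨fun T => ∑ j, if T = Tj j then w j else 0, ?_, ?_, ?_, ?_⟩
  · intro T
    exact Finset.sum_nonneg fun j _ => by split_ifs with h; exact hwnn j; exact le_refl 0
  · intro T hT i hi
    have hex : ∃ j, T = Tj j := by
      by_contra hcon
      push_neg at hcon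
      exact hT (Finset.sum_eq_zero fun j _ => by simp [hcon j])
    obtain ⟨j, rfl⟩ := hex
    refine ⟨2, ?_⟩
    show Tj j (Tj j i) = 0
    by_cases h : i = j ∨ i = 0
    · simp only [hTj, h, if_true]
      simp
    · simp only [hTj, h, if_false]
      simp
  · rw [Finset.sum_comm]
    calc ∑ j, ∑ T : Fin (k+1) → Fin (k+1), (if T = Tj j then w j else 0)
        = ∑ j, w j := by
          refine Finset.sum_congr rfl fun j _ => ?_
          rw [Finset.sum_ite_eq' Finset.univ (Tj j) (fun _ => w j)]
          simp
      _ = L := hwsum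
  · intro i
    have key : (∑ T : Fin (k+1) → Fin (k+1), (∑ j, if T = Tj j then w j else 0) *
          ((Finset.univ.filter fun l : Fin (k + 1) => l ≠ 0 ∧ T l = i).card : ℚ))
        = ∑ j, w j * ((Finset.univ.filter fun l : Fin (k + 1) => l ≠ 0 ∧ Tj j l = i).card : ℚ) := by
      simp_rw [Finset.sum_mul, ite_mul, zero_mul]
      rw [Finset.sum_comm]
      refine Finset.sum_congr rfl fun j _ => ?_
      rw [Finset.sum_ite_eq' Finset.univ (Tj j)
        (fun T => w j * ((Finset.univ.filter fun l : Fin (k + 1) => l ≠ 0 ∧ T l = i).card : ℚ))]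
      simp
    rw [key]
    by_cases hi : i = 0
    · subst hi
      have c0 : ((Finset.univ.filter fun l : Fin (k + 1) => l ≠ 0 ∧ Tj 0 l = 0).card : ℚ) = k := by
        have hset : (Finset.univ.filter fun l : Fin (k + 1) => l ≠ 0 ∧ Tj 0 l = 0)
            = Finset.univ.erase 0 := by
          ext l; simp [hTj]
        rw [hset, Finset.card_erase_of_mem (Finset.mem_univ _)]
        simp
      have c1 : ∀ j : Fin (k+1), j ≠ 0 →
          ((Finset.univ.filter fun l : Fin (k + 1) => l ≠ 0 ∧ Tj j l = 0).card : ℚ) = 1 := by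
        intro j hj
        have hset : (Finset.univ.filter fun l : Fin (k + 1) => l ≠ 0 ∧ Tj j l = 0) = {j} := by
          ext l
          simp only [Finset.mem_filter, Finset.mem_univ, true_and, Finset.mem_singleton, hTj]
          constructor
          · rintro ⟨hl0, hl⟩
            by_cases h : l = j ∨ l = 0
            · tauto
            · rw [if_neg h] at hl; exact absurd hl hj
          · rintro rfl
            exact ⟨hj, by simp⟩
        rw [hset]; simp
      rw [Fin.sum_univ_succ]
      have hrw : ∀ j : Fin k, w j.succ *
          ((Finset.univ.filter fun l : Fin (k + 1) => l ≠ 0 ∧ Tj j.succ l = 0).card : ℚ)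
          = w j.succ := by
        intro j; rw [c1 j.succ (Fin.succ_ne_zero j), mul_one]
      rw [c0, Finset.sum_congr rfl (fun j _ => hrw j)]
      have hsum' : ∑ j : Fin k, w j.succ = L - w 0 := by
        have hws := hwsum
        rw [Fin.sum_univ_succ] at hws
        linarith
      rw [hsum']
      have hcap := hwcap 0
      have ha0 : a 0 = C 0 - L := by simp [ha]
      rw [ha0] at hcap
      nlinarith
    · have cz : ∀ j : Fin (k+1), j ≠ i →
          ((Finset.univ.filter fun l : Fin (k + 1) => l ≠ 0 ∧ Tj j l = i).card : ℚ) = 0 := by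
        intro j hj
        have hset : (Finset.univ.filter fun l : Fin (k + 1) => l ≠ 0 ∧ Tj j l = i) = ∅ := by
          ext l
          simp only [Finset.mem_filter, Finset.mem_univ, true_and, Finset.notMem_empty,
            iff_false, not_and, hTj]
          intro hl0
          split_ifs with h
          · exact fun h0 => hi h0.symm
          · exact fun h0 => hj h0
        rw [hset]; simp
      have ci : ((Finset.univ.filter fun l : Fin (k + 1) => l ≠ 0 ∧ Tj i l = i).card : ℚ)
          = (k : ℚ) - 1 := by
        have hset : (Finset.univ.filter fun l : Fin (k + 1) => l ≠ 0 ∧ Tj i l = i)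
            = (Finset.univ.erase 0).erase i := by
          ext l
          simp only [Finset.mem_filter, Finset.mem_univ, true_and, Finset.mem_erase, hTj]
          constructor
          · rintro ⟨hl0, hl⟩
            split_ifs at hl with h
            · exact absurd hl.symm hi
            · push_neg at h; exact ⟨h.1, hl0, trivial⟩
          · rintro ⟨hli, hl0, -⟩
            refine ⟨hl0, ?_⟩
            rw [if_neg (by tauto)]
        rw [hset, Finset.card_erase_of_mem, Finset.card_erase_of_mem (Finset.mem_univ _)]
        · simp only [Finset.card_univ, Fintype.card_fin]
          have h2 : k + 1 - 1 - 1 = k - 1 := by omega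
          rw [h2, Nat.cast_sub hk, Nat.cast_one]
        · exact Finset.mem_erase.mpr ⟨hi, Finset.mem_univ _⟩
      rw [Finset.sum_eq_single i (fun j _ hj => by rw [cz j hj, mul_zero])
        (fun h => absurd (Finset.mem_univ i) h), ci]
      have hcap := hwcap i
      have hai : a i = C i := by simp [ha, hi]
      linarith [hai ▸ hcap]
end
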